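/- For every τ in the complex upper half-plane, the Jacobi theta functions satisfy the identity θ_3(τ)^4 = θ_4(τ)^4 + θ_2(τ)^4. -/

import Mathlib

/-!
Squaring a theta series gives a sum over `ℤ × ℤ`. Splitting the pairs `(m, n)` by the parity of
`m + n` and writing `m = a + b` (resp. `a + b + 1`), `n = a - b` turns `(m + c)² + (n + c')²` into
`2 (a + ·)² + 2 (b + ·)²`, so a product of two shifted theta series at `τ` is a sum of two such
products at `2τ`. This gives `θ₃(τ)² = θ₃(2τ)² + θ₂(2τ)²`, `θ₄(τ)² = θ₃(2τ)² - θ₂(2τ)²` and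
`θ₂(τ)² = 2 θ₂(2τ) θ₃(2τ)`, whence `θ₃⁴ - θ₄⁴ = 4 θ₂(2τ)² θ₃(2τ)² = θ₂⁴`.
-/

open Complex

/-- Jacobi theta function `θ₂(τ) = ∑_{n ∈ ℤ} q₁^((n+1/2)²)` with `q₁ = exp(iπτ)`. -/
noncomputable def θ₂ (τ : ℂ) : ℂ :=
  ∑' n : ℤ, Complex.exp (Real.pi * I * τ * ((n : ℂ) + 1 / 2) ^ 2)

/-- Jacobi theta function `θ₃(τ) = ∑_{n ∈ ℤ} q₁^(n²)` with `q₁ = exp(iπτ)`. -/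
noncomputable def θ₃ (τ : ℂ) : ℂ :=
  ∑' n : ℤ, Complex.exp (Real.pi * I * τ * (n : ℂ) ^ 2)

/-- Jacobi theta function `θ₄(τ) = ∑_{n ∈ ℤ} (-1)ⁿ q₁^(n²)` with `q₁ = exp(iπτ)`. -/
noncomputable def θ₄ (τ : ℂ) : ℂ :=
  ∑' n : ℤ, (-1) ^ n * Complex.exp (Real.pi * I * τ * (n : ℂ) ^ 2)

def intPairParityEquiv : (ℤ × ℤ) ⊕ (ℤ × ℤ) ≃ ℤ × ℤ where
  toFun
    | .inl (a, b) => (a + b, a - b)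
    | .inr (a, b) => (a + b + 1, a - b)
  -- `Int` division rounds down, so the same halves also recover `(a, b)` from `(a + b + 1, a - b)`.
  invFun p :=
    if (p.1 + p.2) % 2 = 0 then .inl ((p.1 + p.2) / 2, (p.1 - p.2) / 2)
    else .inr ((p.1 + p.2) / 2, (p.1 - p.2) / 2)
  left_inv := by
    rintro (⟨a, b⟩ | ⟨a, b⟩) <;> dsimp only
    · rw [if_pos (by omega)]
      simp only [Sum.inl.injEq, Prod.mk.injEq]
      omega
    · rw [if_neg (by omega)]
      simp only [Sum.inr.injEq, Prod.mk.injEq]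
      omega
  right_inv := by
    rintro ⟨m, n⟩
    by_cases h : (m + n) % 2 = 0
    · simp only [if_pos h, Prod.mk.injEq]
      omega
    · simp only [if_neg h, Prod.mk.injEq]
      omega

theorem tsum_mul_tsum_eq_add_parity {R : Type*} [NormedRing R] [CompleteSpace R] {f g : ℤ → R}
    (hf : Summable fun n => ‖f n‖) (hg : Summable fun n => ‖g n‖) :
    (∑' n, f n) * (∑' n, g n) =
      (∑' p : ℤ × ℤ, f (p.1 + p.2) * g (p.1 - p.2)) +
        ∑' p : ℤ × ℤ, f (p.1 + p.2 + 1) * g (p.1 - p.2) := by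
  have hfg : Summable fun p : ℤ × ℤ => f p.1 * g p.2 := summable_mul_of_summable_norm hf hg
  have hsplit := hfg.comp_injective intPairParityEquiv.injective
  rw [tsum_mul_tsum_of_summable_norm hf hg, ← intPairParityEquiv.tsum_eq]
  exact Summable.tsum_sum (hsplit.comp_injective Sum.inl_injective)
    (hsplit.comp_injective Sum.inr_injective)

noncomputable def shiftedThetaTerm (τ c : ℂ) (n : ℤ) : ℂ :=
  cexp (Real.pi * I * τ * ((n : ℂ) + c) ^ 2)

noncomputable def shiftedTheta (τ c : ℂ) : ℂ :=
  ∑' n : ℤ, shiftedThetaTerm τ c n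

theorem summable_shiftedThetaTerm {τ : ℂ} (hτ : 0 < τ.im) (c : ℂ) :
    Summable (shiftedThetaTerm τ c) := by
  have hterm (n : ℤ) : shiftedThetaTerm τ c n =
      cexp (Real.pi * I * c ^ 2 * τ) * jacobiTheta₂_term n (c * τ) τ := by
    rw [shiftedThetaTerm, jacobiTheta₂_term, ← Complex.exp_add]
    ring_nf
  rw [funext hterm]
  exact ((summable_jacobiTheta₂_term_iff _ _).mpr hτ).mul_left _

theorem shiftedThetaTerm_add_one (τ c : ℂ) (n : ℤ) :
    shiftedThetaTerm τ c (n + 1) = shiftedThetaTerm τ (c + 1) n := by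
  simp only [shiftedThetaTerm, Int.cast_add, Int.cast_one, add_assoc, add_comm (1 : ℂ)]

theorem shiftedTheta_add_one (τ c : ℂ) : shiftedTheta τ (c + 1) = shiftedTheta τ c := by
  simp only [shiftedTheta, ← shiftedThetaTerm_add_one]
  exact (Equiv.addRight 1).tsum_eq (shiftedThetaTerm τ c)

theorem shiftedThetaTerm_add_mul_sub (τ c c' : ℂ) (a b : ℤ) :
    shiftedThetaTerm τ c (a + b) * shiftedThetaTerm τ c' (a - b) =
      shiftedThetaTerm (2 * τ) ((c + c') / 2) a * shiftedThetaTerm (2 * τ) ((c - c') / 2) b := by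
  simp only [shiftedThetaTerm, ← Complex.exp_add, Int.cast_add, Int.cast_sub]
  ring_nf

theorem tsum_shiftedThetaTerm_mul {τ : ℂ} (hτ : 0 < τ.im) (c c' : ℂ) :
    ∑' p : ℤ × ℤ, shiftedThetaTerm τ c p.1 * shiftedThetaTerm τ c' p.2 =
      shiftedTheta τ c * shiftedTheta τ c' :=
  (tsum_mul_tsum_of_summable_norm (summable_shiftedThetaTerm hτ c).norm
    (summable_shiftedThetaTerm hτ c').norm).symm

theorem shiftedTheta_mul {τ : ℂ} (hτ : 0 < τ.im) (c c' : ℂ) :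
    shiftedTheta τ c * shiftedTheta τ c' =
      shiftedTheta (2 * τ) ((c + c') / 2) * shiftedTheta (2 * τ) ((c - c') / 2) +
        shiftedTheta (2 * τ) ((c + 1 + c') / 2) * shiftedTheta (2 * τ) ((c + 1 - c') / 2) := by
  have hτ2 : 0 < (2 * τ).im := by simpa using hτ
  rw [shiftedTheta, shiftedTheta, tsum_mul_tsum_eq_add_parity
    (summable_shiftedThetaTerm hτ c).norm (summable_shiftedThetaTerm hτ c').norm]
  simp only [shiftedThetaTerm_add_one, shiftedThetaTerm_add_mul_sub, tsum_shiftedThetaTerm_mul hτ2]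

theorem θ₃_eq_shiftedTheta (τ : ℂ) : θ₃ τ = shiftedTheta τ 0 := by
  simp [θ₃, shiftedTheta, shiftedThetaTerm]

theorem θ₂_eq_shiftedTheta (τ : ℂ) : θ₂ τ = shiftedTheta τ (1 / 2) := rfl

theorem θ₃_sq {τ : ℂ} (hτ : 0 < τ.im) : θ₃ τ ^ 2 = θ₃ (2 * τ) ^ 2 + θ₂ (2 * τ) ^ 2 := by
  rw [sq, θ₃_eq_shiftedTheta, shiftedTheta_mul hτ, θ₃_eq_shiftedTheta, θ₂_eq_shiftedTheta]
  norm_num [sq]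

theorem θ₂_sq {τ : ℂ} (hτ : 0 < τ.im) : θ₂ τ ^ 2 = 2 * θ₂ (2 * τ) * θ₃ (2 * τ) := by
  have hperiodic : shiftedTheta (2 * τ) 1 = shiftedTheta (2 * τ) 0 := by
    simpa using shiftedTheta_add_one (2 * τ) 0
  rw [sq, θ₂_eq_shiftedTheta, shiftedTheta_mul hτ, θ₃_eq_shiftedTheta, θ₂_eq_shiftedTheta]
  norm_num [hperiodic]
  ring

theorem θ₄_sq {τ : ℂ} (hτ : 0 < τ.im) : θ₄ τ ^ 2 = θ₃ (2 * τ) ^ 2 - θ₂ (2 * τ) ^ 2 := by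
  have hτ2 : 0 < (2 * τ).im := by simpa using hτ
  have hθ₄ : θ₄ τ = ∑' n : ℤ, (-1 : ℂ) ^ n * shiftedThetaTerm τ 0 n := by
    simp [θ₄, shiftedThetaTerm]
  have hsummable : Summable fun n : ℤ => ‖(-1 : ℂ) ^ n * shiftedThetaTerm τ 0 n‖ := by
    simpa using (summable_shiftedThetaTerm hτ 0).norm
  have hsign (m n : ℤ) : (-1 : ℂ) ^ m * (-1) ^ n = (-1) ^ (m + n) :=
    (zpow_add₀ (by norm_num) m n).symm
  have heven (a b : ℤ) : (-1 : ℂ) ^ (a + b) * shiftedThetaTerm τ 0 (a + b) *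
      ((-1) ^ (a - b) * shiftedThetaTerm τ 0 (a - b)) =
      shiftedThetaTerm (2 * τ) 0 a * shiftedThetaTerm (2 * τ) 0 b := by
    rw [mul_mul_mul_comm, hsign, Even.neg_one_zpow ⟨a, by ring⟩, one_mul,
      shiftedThetaTerm_add_mul_sub]
    norm_num
  have hodd (a b : ℤ) : (-1 : ℂ) ^ (a + b + 1) * shiftedThetaTerm τ 0 (a + b + 1) *
      ((-1) ^ (a - b) * shiftedThetaTerm τ 0 (a - b)) =
      -(shiftedThetaTerm (2 * τ) (1 / 2) a * shiftedThetaTerm (2 * τ) (1 / 2) b) := by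
    rw [mul_mul_mul_comm, hsign, Odd.neg_one_zpow ⟨a, by ring⟩, neg_one_mul,
      shiftedThetaTerm_add_one, shiftedThetaTerm_add_mul_sub]
    norm_num
  rw [sq, hθ₄, tsum_mul_tsum_eq_add_parity hsummable hsummable]
  simp only [heven, hodd, tsum_neg, tsum_shiftedThetaTerm_mul hτ2, θ₃_eq_shiftedTheta,
    θ₂_eq_shiftedTheta]
  ring

/-- Jacobi's identity `θ₃⁴ = θ₄⁴ + θ₂⁴` on the upper half-plane. -/
theorem theta_fourth_power_identity (τ : ℂ) (hτ : 0 < τ.im) :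
    θ₃ τ ^ 4 = θ₄ τ ^ 4 + θ₂ τ ^ 4 := by
  linear_combination (θ₃ τ ^ 2 + θ₃ (2 * τ) ^ 2 + θ₂ (2 * τ) ^ 2) * θ₃_sq hτ
    - (θ₄ τ ^ 2 + θ₃ (2 * τ) ^ 2 - θ₂ (2 * τ) ^ 2) * θ₄_sq hτ
    - (θ₂ τ ^ 2 + 2 * θ₂ (2 * τ) * θ₃ (2 * τ)) * θ₂_sq hτ
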